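/- arXiv:1501.01772 — 8 statements merged into one kernel-verified Lean document; each statement's English description precedes it below -/
import Mathlib

section
/- For all natural numbers m and p with p ≤ m, the Lucas numbers satisfy l_m · l_p = l_{m+p} + (−1)^p · l_{m−p}, where the identity is read in the integers. -/
/-- The Lucas sequence: `l 0 = 2`, `l 1 = 1`, `l (n+2) = l (n+1) + l n`. -/
def lucas : ℕ → ℕ
  | 0 => 2
  | 1 => 1
  | n + 2 => lucas (n + 1) + lucas n

theorem lucas_mul_lucas (m p : ℕ) (hpm : p ≤ m) :
    (lucas m : ℤ) * (lucas p : ℤ) =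
      (lucas (m + p) : ℤ) + (-1) ^ p * (lucas (m - p) : ℤ) := by
  obtain ⟨k, rfl⟩ := Nat.exists_eq_add_of_le hpm
  simp only [Nat.add_sub_cancel_left]
  have key : ∀ p k : ℕ, (lucas (k + p) : ℤ) * lucas p
      = lucas (k + p + p) + (-1) ^ p * lucas k := by
    intro p
    induction p using Nat.strong_induction_on with
    | _ p ih =>
      match p with
      | 0 => intro k; simp [lucas]; ring
      | 1 =>
        intro k
        have : lucas (k + 1 + 1) = lucas (k + 1) + lucas k := rfl
        simp only [lucas, this]
        push_cast
        ring
      | p + 2 =>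
        intro k
        have h1 := ih (p + 1) (by omega) (k + 1)
        have h2 := ih p (by omega) (k + 2)
        have e1 : lucas (p + 2) = lucas (p + 1) + lucas p := rfl
        have e2 : lucas (k + 2) = lucas (k + 1) + lucas k := rfl
        have e3 : lucas (k + (p + 2) + (p + 2)) =
            lucas (k + (p + 2) + (p + 1)) + lucas (k + (p + 2) + p) := by
          have : k + (p + 2) + (p + 2) = (k + p + p + 2) + 2 := by ring
          rw [this]
          show lucas (k + p + p + 2 + 1) + lucas (k + p + p + 2) = _
          congr 2 <;> ring
        have e4 : k + 1 + (p + 1) = k + (p + 2) := by omega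
        have e5 : k + 2 + p = k + (p + 2) := by omega
        rw [e4] at h1
        rw [e2, e5] at h2
        rw [e1, e3]
        have hp1 : ((-1 : ℤ)) ^ (p + 1) = -(-1) ^ p := by ring
        have hp2 : ((-1 : ℤ)) ^ (p + 2) = (-1) ^ p := by ring
        rw [hp1] at h1
        push_cast [hp2]
        push_cast at h1 h2
        ring_nf at h1 h2 ⊢
        linarith
  have := key p k
  rw [Nat.add_comm p k] at *
  linarith [this]
end

section
/- For all natural numbers m and p, the Lucas numbers satisfy l_m · l_{m+p} = l_{2m+p} + (−1)^m · l_p, where the identity is read in the integers. -/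
theorem lucas_mul_lucas_add (m p : ℕ) :
    (lucas m : ℤ) * (lucas (m + p) : ℤ) =
      (lucas (2 * m + p) : ℤ) + (-1) ^ m * (lucas p : ℤ) := by
  induction m using Nat.twoStepInduction generalizing p with
  | zero => simp [lucas]; ring
  | one =>
    have h : 2 * 1 + p = p + 2 := by ring
    have h2 : 1 + p = p + 1 := by ring
    rw [h, h2]
    simp only [lucas]
    push_cast
    ring
  | more m ih1 ih2 =>
    have e1 : m + 2 + p = (m + 1) + (p + 1) := by ring
    have e2 : m + 2 + p = m + (p + 2) := by ring
    have key : (lucas (m + 2) : ℤ) = lucas (m + 1) + lucas m := by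
      simp only [lucas]; push_cast; ring
    rw [key, add_mul]
    nth_rewrite 1 [e1]
    nth_rewrite 1 [e2]
    rw [ih2 (p + 1), ih1 (p + 2)]
    have e3 : 2 * (m + 1) + (p + 1) = (2 * m + p) + 3 := by ring
    have e4 : 2 * m + (p + 2) = (2 * m + p) + 2 := by ring
    have e5 : 2 * (m + 2) + p = (2 * m + p) + 4 := by ring
    rw [e3, e4, e5]
    have l1 : (lucas ((2 * m + p) + 4) : ℤ)
        = lucas ((2 * m + p) + 3) + lucas ((2 * m + p) + 2) := by
      simp only [lucas]; push_cast; ring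
    have l2 : (lucas (p + 2) : ℤ) = lucas (p + 1) + lucas p := by
      simp only [lucas]; push_cast; ring
    rw [l1, l2]
    ring
end

section
/- Fix rationals α and β and a natural number n ≥ 1. For integers p and q, the n-th generalized Fibonacci-Lucas quaternion G_n^{p,q} in H_ℚ(α,β) equals 0 if and only if p = 0 and q = 0. -/
open scoped Quaternion

/-- The generalized Fibonacci-Lucas numbers `g n ^ {p,q} = p * f (n-1) + q * l n` (for `n ≥ 1`). -/
def g (p q : ℤ) (n : ℕ) : ℤ := p * Nat.fib (n - 1) + q * lucas n

/-- The `n`-th generalized Fibonacci-Lucas quaternion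
`G_n^{p,q} = g_n^{p,q} + g_{n+1}^{p,q} i + g_{n+2}^{p,q} j + g_{n+3}^{p,q} k` in `ℍ[ℚ, α, β]`. -/
def G (α β : ℚ) (p q : ℤ) (n : ℕ) : ℍ[ℚ, α, β] :=
  ⟨(g p q n : ℚ), (g p q (n + 1) : ℚ), (g p q (n + 2) : ℚ), (g p q (n + 3) : ℚ)⟩

/-- The norm of a generalized quaternion:
`n(a) = a₁² - α a₂² - β a₃² + α β a₄²`. -/
def qnorm (α β : ℚ) (a : ℍ[ℚ, α, β]) : ℚ :=
  a.re ^ 2 - α * a.imI ^ 2 - β * a.imJ ^ 2 + α * β * a.imK ^ 2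

lemma lucas_succ_eq (m : ℕ) : lucas (m + 1) = Nat.fib m + Nat.fib (m + 2) := by
  induction m using Nat.twoStepInduction with
  | zero => rfl
  | one => rfl
  | more m ih1 ih2 =>
    show lucas (m + 2) + lucas (m + 1) = _
    have a : Nat.fib (m + 2) = Nat.fib m + Nat.fib (m + 1) := Nat.fib_add_two
    have b : Nat.fib (m + 2 + 2) = Nat.fib (m + 2) + Nat.fib (m + 1 + 2) := Nat.fib_add_two
    rw [ih1, ih2]
    omega

lemma fib_det (m : ℕ) :
    (Nat.fib m : ℤ) * Nat.fib (m + 3) - Nat.fib (m + 1) * Nat.fib (m + 2) = (-1) ^ (m + 1) := by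
  induction m with
  | zero => simp
  | succ m ih =>
    have h1 : (Nat.fib (m + 2) : ℤ) = Nat.fib (m + 1) + Nat.fib m := by
      rw [Nat.fib_add_two]; push_cast; ring
    have h2 : (Nat.fib (m + 4) : ℤ) = Nat.fib (m + 3) + Nat.fib (m + 2) := by
      rw [Nat.fib_add_two (n := m + 2)]; push_cast; ring
    show (Nat.fib (m+1) : ℤ) * Nat.fib (m + 4) - Nat.fib (m + 2) * Nat.fib (m + 3) = (-1) ^ (m + 2)
    linear_combination (-1 : ℤ) * ih + (Nat.fib (m+1) : ℤ) * h2 - (Nat.fib (m+3) : ℤ) * h1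

theorem gen_fib_lucas_quaternion_eq_zero_iff (α β : ℚ) (n : ℕ) (hn : 1 ≤ n) (p q : ℤ) :
    G α β p q n = 0 ↔ p = 0 ∧ q = 0 := by
  constructor
  · intro h
    obtain ⟨m, rfl⟩ : ∃ m, n = m + 1 := ⟨n - 1, by omega⟩
    have h1 : g p q (m + 1) = 0 := by
      have := congrArg QuaternionAlgebra.re h
      simp [G] at this
      exact_mod_cast this
    have h2 : g p q (m + 2) = 0 := by
      have := congrArg QuaternionAlgebra.imI h
      simp [G] at this
      exact_mod_cast this
    have e1 : p * (Nat.fib m : ℤ) + q * ((Nat.fib m : ℤ) + Nat.fib (m + 2)) = 0 := by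
      unfold g at h1
      rw [lucas_succ_eq] at h1
      push_cast at h1 ⊢
      simpa using h1
    have e2 : p * (Nat.fib (m + 1) : ℤ)
        + q * ((Nat.fib (m + 1) : ℤ) + Nat.fib (m + 3)) = 0 := by
      unfold g at h2
      rw [lucas_succ_eq] at h2
      push_cast at h2 ⊢
      simpa using h2
    have key : q * ((Nat.fib m : ℤ) * Nat.fib (m + 3) - Nat.fib (m + 1) * Nat.fib (m + 2)) = 0 := by
      linear_combination (Nat.fib m : ℤ) * e2 - (Nat.fib (m + 1) : ℤ) * e1
    rw [fib_det] at key
    have hq : q = 0 := by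
      rcases mul_eq_zero.mp key with h' | h'
      · exact h'
      · exact absurd h' (pow_ne_zero _ (by norm_num))
    subst hq
    have hfib : (Nat.fib (m + 1) : ℤ) ≠ 0 := by
      exact_mod_cast (Nat.fib_pos.mpr m.succ_pos).ne'
    have hp : p * (Nat.fib (m + 1) : ℤ) = 0 := by linarith [e2]
    exact ⟨(mul_eq_zero.mp hp).resolve_right hfib, rfl⟩
  · rintro ⟨rfl, rfl⟩
    unfold G g
    norm_num
    rfl
end

section
/- For all natural numbers m < n (with m ≥ 1) and all integers p, q, p′, q′, the generalized Fibonacci-Lucas numbers satisfy the product identity 5·g_n^{p,q} · 5·g_m^{p′,q′} = 5·g_{m+n−2}^{5p′q, pp′} + 5·g_{m+n−1}^{5p′q, 0} + 5·g_{n−m}^{(−1)^m·5p′q, (−1)^m·pp′} + 5·g_{n−m+1}^{(−1)^m·5p′q, 0} + 5·g_{m+n}^{5pq′, 5qq′} + 5·g_{n−m}^{(−1)^m·5pq′, (−1)^m·5qq′}. -/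
lemma lucas_eq_fib (n : ℕ) : lucas (n + 1) = Nat.fib n + Nat.fib (n + 2) := by
  induction n using Nat.twoStepInduction with
  | zero => rfl
  | one => rfl
  | more n ih1 ih2 =>
    show lucas (n + 2) + lucas (n + 1) = _
    rw [ih1, ih2, Nat.fib_add_two (n := n + 2), Nat.fib_add_two (n := n + 1),
      Nat.fib_add_two (n := n)]
    ring

lemma cassini (a : ℕ) :
    (Nat.fib (a + 1) : ℤ) ^ 2 - Nat.fib a * Nat.fib (a + 2) = (-1) ^ a := by
  induction a with
  | zero => simp
  | succ a ih =>
    have h1 : (Nat.fib (a + 2) : ℤ) = Nat.fib a + Nat.fib (a + 1) := by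
      exact_mod_cast congrArg (Nat.cast : ℕ → ℤ) (Nat.fib_add_two (n := a))
    have h2 : (Nat.fib (a + 3) : ℤ) = Nat.fib (a + 1) + Nat.fib (a + 2) := by
      exact_mod_cast congrArg (Nat.cast : ℕ → ℤ) (Nat.fib_add_two (n := a + 1))
    have : (Nat.fib (a + 2) : ℤ) ^ 2 - Nat.fib (a + 1) * Nat.fib (a + 3) = -(-1) ^ a := by
      rw [h2, h1]; rw [h1] at ih; linear_combination -ih
    rw [this, pow_succ]; ring

lemma fib_add_int (x y : ℕ) :
    (Nat.fib (x + y + 1) : ℤ) = Nat.fib x * Nat.fib y + Nat.fib (x + 1) * Nat.fib (y + 1) := by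
  exact_mod_cast congrArg (Nat.cast : ℕ → ℤ) (Nat.fib_add x y)

theorem five_g_mul_five_g (m n : ℕ) (hm : 1 ≤ m) (hmn : m < n) (p q p' q' : ℤ) :
    (5 * g p q n) * (5 * g p' q' m) =
      5 * g (5 * p' * q) (p * p') (m + n - 2) +
      5 * g (5 * p' * q) 0 (m + n - 1) +
      5 * g ((-1) ^ m * (5 * p' * q)) ((-1) ^ m * (p * p')) (n - m) +
      5 * g ((-1) ^ m * (5 * p' * q)) 0 (n - m + 1) +
      5 * g (5 * p * q') (5 * q * q') (m + n) +
      5 * g ((-1) ^ m * (5 * p * q')) ((-1) ^ m * (5 * q * q')) (n - m) := by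
  obtain ⟨a, rfl⟩ : ∃ a, m = a + 1 := ⟨m - 1, by omega⟩
  obtain ⟨k, rfl⟩ : ∃ k, n = a + k + 2 := ⟨n - a - 2, by omega⟩
  simp only [g]
  have e1 : a + 1 + (a + k + 2) - 2 = 2 * a + k + 1 := by omega
  have e2 : a + 1 + (a + k + 2) - 1 = 2 * a + k + 2 := by omega
  have e3 : a + k + 2 - (a + 1) = k + 1 := by omega
  have e4 : a + 1 + (a + k + 2) = 2 * a + k + 3 := by omega
  have e5 : a + k + 2 - 1 = a + k + 1 := by omega
  have e6 : a + 1 - 1 = a := by omega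
  rw [e1, e2, e3, e4, e5, e6]
  simp only [Nat.add_sub_cancel]
  -- abbreviations
  set A : ℤ := (Nat.fib a : ℤ) with hA
  set B : ℤ := (Nat.fib (a + 1) : ℤ) with hB
  set K : ℤ := (Nat.fib k : ℤ) with hK
  set L : ℤ := (Nat.fib (k + 1) : ℤ) with hL
  have fa2 : (Nat.fib (a + 2) : ℤ) = A + B := by
    rw [hA, hB]; exact_mod_cast congrArg (Nat.cast : ℕ → ℤ) (Nat.fib_add_two (n := a))
  have fa3 : (Nat.fib (a + 3) : ℤ) = A + 2 * B := by
    have := congrArg (Nat.cast : ℕ → ℤ) (Nat.fib_add_two (n := a + 1))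
    push_cast at this; rw [this, fa2]; ring
  have fk2 : (Nat.fib (k + 2) : ℤ) = K + L := by
    rw [hK, hL]; exact_mod_cast congrArg (Nat.cast : ℕ → ℤ) (Nat.fib_add_two (n := k))
  have fk3 : (Nat.fib (k + 3) : ℤ) = K + 2 * L := by
    have := congrArg (Nat.cast : ℕ → ℤ) (Nat.fib_add_two (n := k + 1))
    push_cast at this; rw [this, fk2]; ring
  -- fib (a+k+i)
  have F1 : (Nat.fib (a + k + 1) : ℤ) = A * K + B * L := fib_add_int a k
  have F2 : (Nat.fib (a + k + 2) : ℤ) = B * K + (A + B) * L := by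
    have h := fib_add_int (a + 1) k
    rw [show a + 1 + k = a + k + 1 from by omega] at h
    rw [h, fa2]
  have F0 : (Nat.fib (a + k) : ℤ) = (B - A) * K + A * L := by
    have := congrArg (Nat.cast : ℕ → ℤ) (Nat.fib_add_two (n := a + k))
    push_cast at this
    rw [F1, F2] at this; linarith
  have F3 : (Nat.fib (a + k + 3) : ℤ) = (A + B) * K + (A + 2 * B) * L := by
    have h := fib_add_int (a + 2) k
    rw [show a + 2 + k = a + k + 2 from by omega,
        show a + 2 + 1 = a + 3 from by omega] at h
    rw [h, fa2, fa3]
  have F4 : (Nat.fib (a + k + 4) : ℤ) = (A + 2 * B) * K + (2 * A + 3 * B) * L := by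
    have := congrArg (Nat.cast : ℕ → ℤ) (Nat.fib_add_two (n := a + k + 2))
    push_cast at this
    rw [show a + k + 2 + 2 = a + k + 4 from by omega,
        show a + k + 2 + 1 = a + k + 3 from by omega] at this
    rw [this, F2, F3]; ring
  -- fib (2a+k+j)
  have G1 : (Nat.fib (2 * a + k + 1) : ℤ) = A * Nat.fib (a + k) + B * Nat.fib (a + k + 1) := by
    have h := fib_add_int a (a + k)
    rw [show a + (a + k) = 2 * a + k from by omega] at h; rw [h]
  have G2 : (Nat.fib (2 * a + k + 2) : ℤ) = A * Nat.fib (a + k + 1) + B * Nat.fib (a + k + 2) := by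
    have h := fib_add_int a (a + k + 1)
    rw [show a + (a + k + 1) = 2 * a + k + 1 from by omega,
        show a + k + 1 + 1 = a + k + 2 from by omega] at h; rw [h]
  have G3 : (Nat.fib (2 * a + k + 3) : ℤ) = A * Nat.fib (a + k + 2) + B * Nat.fib (a + k + 3) := by
    have h := fib_add_int a (a + k + 2)
    rw [show a + (a + k + 2) = 2 * a + k + 2 from by omega,
        show a + k + 2 + 1 = a + k + 3 from by omega] at h; rw [h]
  have G4 : (Nat.fib (2 * a + k + 4) : ℤ) = A * Nat.fib (a + k + 3) + B * Nat.fib (a + k + 4) := by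
    have h := fib_add_int a (a + k + 3)
    rw [show a + (a + k + 3) = 2 * a + k + 3 from by omega,
        show a + k + 3 + 1 = a + k + 4 from by omega] at h; rw [h]
  have G0 : (Nat.fib (2 * a + k) : ℤ) =
      A * Nat.fib (a + k + 1) + B * Nat.fib (a + k + 2)
      - (A * Nat.fib (a + k) + B * Nat.fib (a + k + 1)) := by
    have := congrArg (Nat.cast : ℕ → ℤ) (Nat.fib_add_two (n := 2 * a + k))
    push_cast at this
    rw [G2, G1] at this; linarith
  -- lucas values
  have La : (lucas (a + 1) : ℤ) = 2 * A + B := by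
    have := congrArg (Nat.cast : ℕ → ℤ) (lucas_eq_fib a)
    push_cast at this; rw [this, fa2, ← hA]; ring
  have Lk1 : (lucas (k + 1) : ℤ) = 2 * K + L := by
    have := congrArg (Nat.cast : ℕ → ℤ) (lucas_eq_fib k)
    push_cast at this; rw [this, fk2, ← hK]; ring
  have Lk2 : (lucas (k + 2) : ℤ) = K + 3 * L := by
    have := congrArg (Nat.cast : ℕ → ℤ) (lucas_eq_fib (k + 1))
    push_cast at this; rw [this, fk3, ← hL]; ring
  have Lak2 : (lucas (a + k + 2) : ℤ) = Nat.fib (a + k + 1) + Nat.fib (a + k + 3) := by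
    have := congrArg (Nat.cast : ℕ → ℤ) (lucas_eq_fib (a + k + 1))
    push_cast at this
    rw [show a + k + 1 + 2 = a + k + 3 from by omega] at this; rw [this]
  have L1 : (lucas (2 * a + k + 1) : ℤ) = Nat.fib (2 * a + k) + Nat.fib (2 * a + k + 2) := by
    have := congrArg (Nat.cast : ℕ → ℤ) (lucas_eq_fib (2 * a + k))
    push_cast at this
    rw [show 2 * a + k + 2 = 2 * a + k + 2 from rfl] at this; rw [this]
  have L2 : (lucas (2 * a + k + 2) : ℤ) = Nat.fib (2 * a + k + 1) + Nat.fib (2 * a + k + 3) := by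
    have := congrArg (Nat.cast : ℕ → ℤ) (lucas_eq_fib (2 * a + k + 1))
    push_cast at this
    rw [show 2 * a + k + 1 + 2 = 2 * a + k + 3 from by omega] at this; rw [this]
  have L3 : (lucas (2 * a + k + 3) : ℤ) = Nat.fib (2 * a + k + 2) + Nat.fib (2 * a + k + 4) := by
    have := congrArg (Nat.cast : ℕ → ℤ) (lucas_eq_fib (2 * a + k + 2))
    push_cast at this
    rw [show 2 * a + k + 2 + 2 = 2 * a + k + 4 from by omega] at this; rw [this]
  have hC : B ^ 2 - A * (A + B) = (-1) ^ a := by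
    have := cassini a; rw [fa2] at this; linarith [this]
  have hpm : ((-1 : ℤ)) ^ (a + 1) = -(-1) ^ a := by rw [pow_succ]; ring
  rw [show 2 * a + k + 2 - 1 = 2 * a + k + 1 from by omega]
  rw [Lak2, La, L1, L2, L3, Lk1, Lk2, G0, G1, G2, G3, G4, F0, F1, F2, F3, F4, hpm]
  linear_combination (-25 * L * q * q' - 25 * L * q * p' - 5 * L * p * p' - 50 * K * q * q'
    - 25 * K * q * p' - 25 * K * p * q' - 10 * K * p * p') * hC
end

section
/- Let n ≥ 1 and p ≥ 1 be natural numbers and q an integer. In the quaternion algebra H_ℚ(−1, p), the norm of the n-th generalized Fibonacci-Lucas quaternion G_n^{p,q} satisfies n(G_n^{p,q}) = g_{2n}^{a,b} = a·f_{2n−1} + b·l_{2n}, where a = 4p³ + p² + 30p²q + 55pq² − 5q² and b = −3p³ + 5q² − 22p²q − 40pq² + 2pq. -/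
open scoped Quaternion

lemma lucas_add_one : ∀ m, lucas (m + 1) = Nat.fib m + Nat.fib (m + 2)
  | 0 => rfl
  | 1 => rfl
  | (m + 2) => by
      show lucas (m + 2) + lucas (m + 1) = _
      rw [lucas_add_one (m+1), lucas_add_one m, Nat.fib_add_two (n := m+2),
        Nat.fib_add_two (n := m)]
      ring

theorem norm_gen_fib_lucas_quaternion_eq_g (n p : ℕ) (hn : 1 ≤ n) (hp : 1 ≤ p) (q : ℤ)
    (a b : ℤ)
    (ha : a = 4 * (p : ℤ) ^ 3 + (p : ℤ) ^ 2 + 30 * (p : ℤ) ^ 2 * q + 55 * (p : ℤ) * q ^ 2 -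
      5 * q ^ 2)
    (hb : b = -3 * (p : ℤ) ^ 3 + 5 * q ^ 2 - 22 * (p : ℤ) ^ 2 * q - 40 * (p : ℤ) * q ^ 2 +
      2 * (p : ℤ) * q) :
    qnorm (-1) (p : ℚ) (G (-1) (p : ℚ) (p : ℤ) q n) = ((g a b (2 * n) : ℤ) : ℚ) ∧
    qnorm (-1) (p : ℚ) (G (-1) (p : ℚ) (p : ℤ) q n) =
      (a : ℚ) * (Nat.fib (2 * n - 1) : ℚ) + (b : ℚ) * (lucas (2 * n) : ℚ) := by
  obtain ⟨m, rfl⟩ := Nat.exists_eq_add_of_le hn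
  have key : qnorm (-1) (p : ℚ) (G (-1) (p : ℚ) (p : ℤ) q (1 + m)) =
      (a : ℚ) * (Nat.fib (2 * (1 + m) - 1) : ℚ) + (b : ℚ) * (lucas (2 * (1 + m)) : ℚ) := by
    have h1 : 1 + m = m + 1 := by ring
    have h2 : 2 * (m + 1) - 1 = 2 * m + 1 := by omega
    have h3 : 2 * (m + 1) = (2 * m + 1) + 1 := by omega
    rw [h1, h2, h3]
    have hf : Nat.fib (2*m+2) = Nat.fib m * Nat.fib (m+1) + Nat.fib (m+1) * Nat.fib (m+2) := by
      rw [show 2*m+2 = m+(m+1)+1 by ring, Nat.fib_add]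
    simp only [hf, qnorm, G, g, Nat.add_sub_cancel, lucas_add_one,
      show Nat.fib (2+m) = Nat.fib (m+2) by rw [Nat.add_comm],
      show Nat.fib (3+m) = Nat.fib (m+3) by rw [Nat.add_comm],
      show Nat.fib (4+m) = Nat.fib (m+4) by rw [Nat.add_comm],
      show Nat.fib (5+m) = Nat.fib (m+5) by rw [Nat.add_comm],
      show Nat.fib (1+m) = Nat.fib (m+1) by rw [Nat.add_comm],
      Nat.fib_add_two, Nat.fib_two_mul_add_one]
    simp only [show m+1+2-1 = m+2 by omega, show m+1+3-1 = m+3 by omega, Nat.fib_add_two]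
    subst ha hb
    push_cast
    ring
  refine ⟨?_, key⟩
  rw [key]
  simp only [g]
  push_cast
  ring
end

section
/- Let p be an odd prime with p ≡ 1 (mod 4). Then for every natural number n ≥ 1 and every natural number q ≥ 0, the norm of the n-th generalized Fibonacci-Lucas quaternion G_n^{p,q} in H_ℚ(−1, p) is nonzero; in particular G_n^{p,q} is invertible in H_ℚ(−1, p). -/
open scoped Quaternion

/-! With `α = -1` the norm of `G_n` is `g_n² + g_{n+1}² - p (g_{n+2}² + g_{n+3}²)`. All `g_m` are
nonnegative, `g_m ≤ g_{m+2}` and `g_{n+2} > 0`, so for `p > 1` this norm is strictly negative.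
A quaternion `a` of nonzero norm is a unit, since `a * star a = star a * a = n(a)`. -/

theorem lucas_le_lucas_add_two (n : ℕ) : lucas n ≤ lucas (n + 2) := by
  rw [lucas]; omega

section FibLucas

variable {p q : ℤ} (hp : 0 ≤ p) (hq : 0 ≤ q)
include hp hq

theorem g_nonneg (n : ℕ) : 0 ≤ g p q n := by
  unfold g; positivity

theorem g_le_g_add_two (n : ℕ) : g p q n ≤ g p q (n + 2) := by
  have hfib : (Nat.fib (n - 1) : ℤ) ≤ Nat.fib (n + 2 - 1) := by
    exact_mod_cast Nat.fib_mono (by omega)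
  have hlucas : (lucas n : ℤ) ≤ lucas (n + 2) := by exact_mod_cast lucas_le_lucas_add_two n
  unfold g
  gcongr

end FibLucas

theorem g_add_two_pos {p q : ℤ} (hp : 0 < p) (hq : 0 ≤ q) (n : ℕ) : 0 < g p q (n + 2) := by
  have hfib : (0 : ℤ) < Nat.fib (n + 2 - 1) := by exact_mod_cast Nat.fib_pos.mpr (by omega)
  unfold g
  positivity

namespace QuaternionAlgebra

variable {α β : ℚ}

theorem mul_star_eq_qnorm (a : ℍ[ℚ, α, β]) : a * star a = (qnorm α β a : ℍ[ℚ, α, β]) := by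
  rw [mul_star_eq_coe]
  congr 1
  simp only [qnorm, re_mul, re_star, imI_star, imJ_star, imK_star]
  ring

theorem isUnit_of_qnorm_ne_zero {a : ℍ[ℚ, α, β]} (h : qnorm α β a ≠ 0) : IsUnit a := by
  have hunit : IsUnit (a * star a) := by
    rw [mul_star_eq_qnorm, ← coe_algebraMap]
    exact h.isUnit.map (algebraMap ℚ _)
  have hcomm : Commute a (star a) := (star_comm_self' a).symm
  exact (hcomm.isUnit_mul_iff.mp hunit).1

theorem qnorm_neg_one_neg (hβ : 1 < β) {a : ℍ[ℚ, -1, β]} (hre : 0 ≤ a.re)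
    (hre_le : a.re ≤ a.imJ) (hI : 0 ≤ a.imI) (hI_le : a.imI ≤ a.imK) (hJ : 0 < a.imJ) :
    qnorm (-1) β a < 0 := by
  unfold qnorm
  nlinarith [mul_le_mul hre_le hre_le hre (hre.trans hre_le),
    mul_le_mul hI_le hI_le hI (hI.trans hI_le), mul_pos hJ hJ, sq_nonneg a.imK]

end QuaternionAlgebra

theorem norm_ne_zero_of_prime_one_mod_four_general (p : ℕ) (hp : Nat.Prime p) (n : ℕ) (q : ℕ) :
    qnorm (-1) (p : ℚ) (G (-1) (p : ℚ) (p : ℤ) (q : ℤ) n) ≠ 0 ∧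
    IsUnit (G (-1) (p : ℚ) (p : ℤ) (q : ℤ) n) := by
  have hp0 : (0 : ℤ) < p := by exact_mod_cast hp.pos
  have hq0 : (0 : ℤ) ≤ q := q.cast_nonneg
  have hnorm : qnorm (-1) (p : ℚ) (G (-1) (p : ℚ) (p : ℤ) (q : ℤ) n) < 0 := by
    apply QuaternionAlgebra.qnorm_neg_one_neg (by exact_mod_cast hp.one_lt) <;>
      simp only [G] <;> norm_cast
    · exact g_nonneg hp0.le hq0 n
    · exact g_le_g_add_two hp0.le hq0 n
    · exact g_nonneg hp0.le hq0 (n + 1)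
    · exact g_le_g_add_two hp0.le hq0 (n + 1)
    · exact g_add_two_pos hp0 hq0 n
  exact ⟨hnorm.ne, QuaternionAlgebra.isUnit_of_qnorm_ne_zero hnorm.ne⟩

theorem norm_ne_zero_of_prime_one_mod_four (p : ℕ) (hp : Nat.Prime p) (hodd : Odd p)
    (hp4 : p % 4 = 1) (n : ℕ) (hn : 1 ≤ n) (q : ℕ) :
    qnorm (-1) (p : ℚ) (G (-1) (p : ℚ) (p : ℤ) (q : ℤ) n) ≠ 0 ∧
    IsUnit (G (-1) (p : ℚ) (p : ℤ) (q : ℤ) n) :=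
  norm_ne_zero_of_prime_one_mod_four_general p hp n q
end

section
/- For every natural number n ≥ 1 and every negative integer q with (n, q) ≠ (1, −2), the norm of the n-th generalized Fibonacci-Lucas quaternion G_n^{5,q} in the quaternion algebra H_ℚ(−1, 5) is nonzero. -/
open scoped Quaternion

lemma lucas_fib : ∀ m : ℕ, lucas (m + 1) = Nat.fib m + Nat.fib (m + 2)
  | 0 => rfl
  | 1 => rfl
  | m + 2 => by
    have h1 := lucas_fib (m + 1)
    have h2 := lucas_fib m
    have h3 : lucas (m + 3) = lucas (m + 2) + lucas (m + 1) := rfl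
    have f1 : Nat.fib (m + 2) = Nat.fib m + Nat.fib (m + 1) := Nat.fib_add_two
    have f2 : Nat.fib (m + 3) = Nat.fib (m + 1) + Nat.fib (m + 2) := Nat.fib_add_two
    have f3 : Nat.fib (m + 4) = Nat.fib (m + 2) + Nat.fib (m + 3) := Nat.fib_add_two
    simp only [show m + 1 + 1 = m + 2 from rfl, show m + 1 + 2 = m + 3 from rfl,
      show m + 2 + 1 = m + 3 from rfl, show m + 2 + 2 = m + 4 from rfl] at *
    omega

theorem norm_ne_zero_p_eq_five (n : ℕ) (hn : 1 ≤ n) (q : ℤ) (hq : q < 0)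
    (hnq : (n, q) ≠ (1, -2)) :
    qnorm (-1) (5 : ℚ) (G (-1) (5 : ℚ) (5 : ℤ) q n) ≠ 0 := by
  have key : (g 5 q n) ^ 2 + (g 5 q (n + 1)) ^ 2 - 5 * (g 5 q (n + 2)) ^ 2
      - 5 * (g 5 q (n + 3)) ^ 2 < 0 := by
    obtain ⟨m, rfl⟩ : ∃ m, n = m + 1 := ⟨n - 1, by omega⟩
    set x : ℤ := (Nat.fib m : ℤ) with hxdef
    set y : ℤ := (Nat.fib (m + 1) : ℤ) with hydef
    have hx : 0 ≤ x := Int.natCast_nonneg _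
    have hy : 1 ≤ y := by
      rw [hydef]
      exact_mod_cast Nat.fib_pos.mpr (Nat.succ_pos m)
    have hg1 : g 5 q (m + 1) = 5 * x + q * (2 * x + y) := by
      simp only [g, lucas_fib, hxdef, hydef]
      push_cast [Nat.fib_add_two]
      ring
    have hg2 : g 5 q (m + 2) = 5 * y + q * (x + 3 * y) := by
      simp only [g, lucas_fib, hxdef, hydef]
      push_cast [Nat.fib_add_two]
      ring
    have hg3 : g 5 q (m + 3) = 5 * x + 5 * y + q * (3 * x + 4 * y) := by
      simp only [g, lucas_fib, hxdef, hydef]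
      push_cast [Nat.fib_add_two]
      ring
    have hg4 : g 5 q (m + 4) = 5 * x + 10 * y + q * (4 * x + 7 * y) := by
      simp only [g, lucas_fib, hxdef, hydef]
      push_cast [Nat.fib_add_two]
      ring
    have hmul : 0 ≤ (q + 1) * (q + 2) := by
      rcases lt_or_ge q (-2) with h | h
      · nlinarith
      · have : q = -2 ∨ q = -1 := by omega
        rcases this with rfl | rfl <;> norm_num
    have e1 : m + 1 + 1 = m + 2 := rfl
    have e2 : m + 1 + 2 = m + 3 := rfl
    have e3 : m + 1 + 3 = m + 4 := rfl
    rw [e1, e2, e3, hg1, hg2, hg3, hg4]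
    nlinarith [mul_nonneg hmul (mul_nonneg hx hx),
      mul_nonneg hmul (mul_nonneg hx (by linarith : (0:ℤ) ≤ y)),
      mul_nonneg hmul (mul_nonneg (by linarith : (0:ℤ) ≤ y) (by linarith : (0:ℤ) ≤ y)),
      mul_nonneg hx (by linarith : (0:ℤ) ≤ y),
      mul_nonneg (mul_nonneg hx hx) (by linarith : (0:ℤ) ≤ -2 * q - 1),
      mul_nonneg (mul_nonneg hx (by linarith : (0:ℤ) ≤ y)) (by linarith : (0:ℤ) ≤ -6 * q - 2),
      mul_nonneg (mul_nonneg (by linarith : (0:ℤ) ≤ y) (by linarith : (0:ℤ) ≤ y))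
        (by linarith : (0:ℤ) ≤ -5 * q - 5),
      mul_pos (mul_pos (by linarith : (0:ℤ) < y) (by linarith : (0:ℤ) < y))
        (by linarith : (0:ℤ) < -q),
      sq_nonneg x, sq_nonneg y, sq_nonneg (x + y)]
  have hrw : qnorm (-1) (5 : ℚ) (G (-1) (5 : ℚ) (5 : ℤ) q n)
      = (((g 5 q n) ^ 2 + (g 5 q (n + 1)) ^ 2 - 5 * (g 5 q (n + 2)) ^ 2
        - 5 * (g 5 q (n + 3)) ^ 2 : ℤ) : ℚ) := by
    simp only [qnorm, G]
    push_cast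
    ring
  rw [hrw]
  intro h
  have : (g 5 q n) ^ 2 + (g 5 q (n + 1)) ^ 2 - 5 * (g 5 q (n + 2)) ^ 2
      - 5 * (g 5 q (n + 3)) ^ 2 = 0 := by exact_mod_cast h
  omega
end

section
/- Let p be an odd prime with p ≡ 1 (mod 4) and p > 5, and let n ≥ 1 be a natural number with n ≡ 0 (mod 3). Then for every integer q, the norm of the n-th generalized Fibonacci-Lucas quaternion G_n^{p,q} in the quaternion algebra H_ℚ(−1, p) is nonzero. -/
open scoped Quaternion

/-!
Everything is decided modulo 2. A sequence with the Fibonacci recurrence satisfies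
`u (n + 3) = 2 u (n + 1) + u n`, so the parities of `f` and `l` are `3`-periodic: `f n` and `l n`
are even exactly when `3 ∣ n`. For `3 ∣ n ≥ 1` and odd `p` this makes `g n` and `g (n + 3)` odd and
`g (n + 1)`, `g (n + 2)` of opposite parities, so `n(G n) = g n² + g (n+1)² - p (g (n+2)² + g (n+3)²)`
is an odd integer.
-/

theorem even_add_three_iff_of_fib_rec {u : ℕ → ℕ} (hu : ∀ n, u (n + 2) = u (n + 1) + u n)
    (n : ℕ) : Even (u (n + 3)) ↔ Even (u n) := by
  rw [hu, hu n]
  simp only [Nat.even_add]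
  tauto

theorem even_fib_iff_three_dvd : ∀ n, Even (Nat.fib n) ↔ 3 ∣ n
  | 0 => by simp
  | 1 => by decide
  | 2 => by decide
  | n + 3 => by
    rw [even_add_three_iff_of_fib_rec (fun _ => Nat.fib_add_two.trans (add_comm _ _)),
      even_fib_iff_three_dvd n]
    omega

theorem even_lucas_iff_three_dvd : ∀ n, Even (lucas n) ↔ 3 ∣ n
  | 0 => by decide
  | 1 => by decide
  | 2 => by decide
  | n + 3 => by
    rw [even_add_three_iff_of_fib_rec (fun _ => rfl), even_lucas_iff_three_dvd n]
    omega

theorem even_g_iff {p : ℤ} (hp : Odd p) (q : ℤ) (n : ℕ) :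
    Even (g p q n) ↔ (3 ∣ n - 1 ↔ Even q ∨ 3 ∣ n) := by
  simp only [g, Int.even_add, Int.even_mul, Int.even_coe_nat, even_fib_iff_three_dvd,
    even_lucas_iff_three_dvd, Int.not_even_iff_odd.mpr hp, false_or]

theorem parity_g_of_three_dvd {p : ℤ} (hp : Odd p) (q : ℤ) {n : ℕ} (hn : 1 ≤ n) (h3 : 3 ∣ n) :
    Odd (g p q n) ∧ (Even (g p q (n + 1)) ↔ Even q) ∧ (Even (g p q (n + 2)) ↔ ¬Even q) ∧
      Odd (g p q (n + 3)) := by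
  simp only [← Int.not_even_iff_odd, even_g_iff hp]
  by_cases hq : Even q <;>
    simp only [hq, true_or, false_or, iff_true, iff_false, not_true_eq_false, not_false_eq_true,
      add_tsub_cancel_right, Nat.add_one_sub_one] <;> omega

theorem qnorm_neg_one_G (β : ℚ) (p q : ℤ) (n : ℕ) :
    qnorm (-1) β (G (-1) β p q n) =
      (g p q n : ℚ) ^ 2 + (g p q (n + 1) : ℚ) ^ 2
        - β * ((g p q (n + 2) : ℚ) ^ 2 + (g p q (n + 3) : ℚ) ^ 2) := by
  simp only [qnorm, G]
  ring

theorem norm_ne_zero_of_prime_gt_five_general (p : ℕ) (hodd : Odd p)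
    (n : ℕ) (hn : 1 ≤ n) (hn3 : n % 3 = 0) (q : ℤ) :
    qnorm (-1) (p : ℚ) (G (-1) (p : ℚ) (p : ℤ) q n) ≠ 0 := by
  have hp : Odd (p : ℤ) := hodd.natCast
  obtain ⟨h0, h1, h2, h3⟩ := parity_g_of_three_dvd hp q hn (Nat.dvd_of_mod_eq_zero hn3)
  have hodd_norm : Odd (g p q n ^ 2 + g p q (n + 1) ^ 2
      - p * (g p q (n + 2) ^ 2 + g p q (n + 3) ^ 2)) := by
    simp only [← Int.not_even_iff_odd] at hp h0 h3 ⊢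
    simp only [Int.even_sub, Int.even_add, Int.even_mul, Int.even_pow, h1, h2]
    tauto
  rw [qnorm_neg_one_G]
  norm_cast
  rintro h
  simp [h] at hodd_norm

theorem norm_ne_zero_of_prime_gt_five (p : ℕ) (hp : Nat.Prime p) (hodd : Odd p)
    (hp4 : p % 4 = 1) (hp5 : 5 < p) (n : ℕ) (hn : 1 ≤ n) (hn3 : n % 3 = 0) (q : ℤ) :
    qnorm (-1) (p : ℚ) (G (-1) (p : ℚ) (p : ℤ) q n) ≠ 0 :=
  norm_ne_zero_of_prime_gt_five_general p hodd n hn hn3 q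
end
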